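/- For every integer n ≥ 3, the extension complexity of the 2-dimensional cyclic polytope P^2_n = conv{(i, i^2) : i ∈ [n]} is at most 2⌊log_2(n − 1)⌋ + 2. -/

import Mathlib

/-!
Write `P(a)` for the convex hull of the points `(i, i²)`, `a ≤ i ≤ n`. The affine reflection `σ`
in the line `x = c` along the tangent direction `(1, 2c)` of the parabola maps the parabola to
itself, `(t, t²) ↦ (2c - t, (2c - t)²)`. For `c = (a + n) / 2` and `a' = ⌈c⌉` this makes `P(a)` the
union of the segments `[p, σ p]` over the points `p ∈ P(a')` right of the axis (a reflection
relation in the sense of Kaibel and Pashkovich). That union is a linear image of `P(a') × ℝ` cut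
by two inequalities, so each halving of `n - a` costs two inequalities. Starting from the point
`P(n)`, which needs none, `⌊log₂(n - 1)⌋ + 1` halvings reach `P(1)`.
-/

noncomputable def cyclic (d : ℕ) (t₁ t₂ : ℤ) : Set (Fin d → ℝ) :=
  convexHull ℝ { x | ∃ i : ℤ, t₁ ≤ i ∧ i ≤ t₂ ∧ x = fun u : Fin d => (i : ℝ) ^ ((u : ℕ) + 1) }

/-- The extension complexity of `P ⊆ ℝ^d`: the least number `m` of inequalities in an
extended formulation, i.e. a system `A y ≤ b`, `C y = e` in some `ℝ^N` together with an
affine projection whose image is `P`. -/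
noncomputable def xc {d : ℕ} (P : Set (Fin d → ℝ)) : ℕ :=
  sInf { m : ℕ | ∃ (N k : ℕ) (A : Matrix (Fin m) (Fin N) ℝ) (b : Fin m → ℝ)
    (C : Matrix (Fin k) (Fin N) ℝ) (e : Fin k → ℝ)
    (π : (Fin N → ℝ) →ᵃ[ℝ] (Fin d → ℝ)),
    P = π '' { y | A.mulVec y ≤ b ∧ C.mulVec y = e } }

open Set

def HasExtension {V : Type*} [AddCommGroup V] [Module ℝ V] (P : Set V) (m : ℕ) : Prop :=
  ∃ (E : Type) (_ : AddCommGroup E) (_ : Module ℝ E) (_ : FiniteDimensional ℝ E)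
    (g : Fin m → E →ᵃ[ℝ] ℝ) (π : E →ᵃ[ℝ] V), P = π '' {y | ∀ i, g i y ≤ 0}

namespace HasExtension

variable {V W : Type*} [AddCommGroup V] [Module ℝ V] [AddCommGroup W] [Module ℝ W]
  {P : Set V} {m : ℕ}

theorem singleton (x : V) : HasExtension {x} 0 :=
  ⟨ℝ, _, _, inferInstance, Fin.elim0, AffineMap.const ℝ ℝ x, by
    ext; simp [eq_comm]⟩

theorem map (h : HasExtension P m) (f : V →ᵃ[ℝ] W) : HasExtension (f '' P) m := by
  obtain ⟨E, _, _, _, g, π, rfl⟩ := h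
  exact ⟨E, _, _, inferInstance, g, f.comp π, by rw [AffineMap.coe_comp, image_comp]⟩

theorem prod_univ {F : Type} [AddCommGroup F] [Module ℝ F] [FiniteDimensional ℝ F]
    (h : HasExtension P m) : HasExtension (P ×ˢ (univ : Set F)) m := by
  obtain ⟨E, _, _, _, g, π, rfl⟩ := h
  refine ⟨E × F, _, _, inferInstance, fun i => (g i).comp AffineMap.fst,
    π.prodMap (AffineMap.id ℝ F), ?_⟩
  ext ⟨v, w⟩
  simp

theorem inter_le (h : HasExtension P m) (f f' : V →ᵃ[ℝ] ℝ) :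
    HasExtension (P ∩ {x | f x ≤ f' x}) (m + 1) := by
  obtain ⟨E, _, _, _, g, π, rfl⟩ := h
  refine ⟨E, _, _, inferInstance, Fin.cons ((f - f').comp π) g, π, ?_⟩
  ext x
  simp only [mem_inter_iff, mem_image, mem_ofPred_eq, Fin.forall_fin_succ, Fin.cons_zero,
    Fin.cons_succ, AffineMap.coe_comp, Function.comp_apply, AffineMap.coe_sub,
    Pi.sub_apply, sub_nonpos]
  grind

end HasExtension

theorem xc_le_of_hasExtension {d m : ℕ} {P : Set (Fin d → ℝ)} (h : HasExtension P m) :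
    xc P ≤ m := by
  obtain ⟨E, _, _, _, g, π, rfl⟩ := h
  let e := (Module.finBasis ℝ E).equivFun
  refine Nat.sInf_le ⟨_, 0,
    LinearMap.toMatrix' (LinearMap.pi fun i => (g i).linear ∘ₗ e.symm.toLinearMap),
    fun i => -g i 0, 0, 0, π.comp e.symm.toLinearMap.toAffineMap, ?_⟩
  have hpre : {y | ∀ i, g i y ≤ 0} = e.symm '' {y | ∀ i, g i (e.symm y) ≤ 0} :=
    (image_preimage_eq _ e.symm.surjective).symm
  have hlin : ∀ i v, (g i).linear v = g i v - g i 0 := fun i v => by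
    simpa using (g i).linearMap_vsub v 0
  rw [hpre, AffineMap.coe_comp, image_comp]
  congr 2
  ext y
  simp [LinearMap.toMatrix'_mulVec, Pi.le_def, hlin]

def parabola (t : ℝ) : Fin 2 → ℝ := ![t, t ^ 2]

theorem parabola_apply_zero (t : ℝ) : parabola t 0 = t := rfl

def parabolaTangent (c : ℝ) : Fin 2 → ℝ := ![1, 2 * c]

-- The reflection in the line `x 0 = c` along the tangent direction of the parabola at `c`.
def parabolaReflection (c : ℝ) : (Fin 2 → ℝ) →ᵃ[ℝ] (Fin 2 → ℝ) :=
  (LinearMap.id - ((2 : ℝ) • LinearMap.proj 0).smulRight (parabolaTangent c)).toAffineMap +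
    AffineMap.const ℝ _ ((2 * c) • parabolaTangent c)

theorem parabolaReflection_apply (c : ℝ) (x : Fin 2 → ℝ) :
    parabolaReflection c x = x + (2 * c - 2 * x 0) • parabolaTangent c := by
  simp only [parabolaReflection, AffineMap.coe_add, Pi.add_apply, LinearMap.coe_toAffineMap,
    LinearMap.sub_apply, LinearMap.id_apply, LinearMap.smulRight_apply, LinearMap.smul_apply,
    LinearMap.coe_proj, Function.eval, AffineMap.const_apply, smul_eq_mul]
  module

theorem parabolaReflection_parabola (c t : ℝ) :
    parabolaReflection c (parabola t) = parabola (2 * c - t) := by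
  ext u
  fin_cases u <;> simp [parabolaReflection_apply, parabola, parabolaTangent] <;> ring

-- The union of the segments `[p, parabolaReflection c p]` over `p ∈ Q` with `c ≤ p 0`:
-- the parameter `μ` runs from `0` down to `2 * c - 2 * p 0`.
def unfolding (c : ℝ) (Q : Set (Fin 2 → ℝ)) : Set (Fin 2 → ℝ) :=
  {z | ∃ p ∈ Q, ∃ μ : ℝ, 2 * c ≤ 2 * p 0 + μ ∧ μ ≤ 0 ∧
    z = p + μ • parabolaTangent c}

section Unfolding

variable {c : ℝ} {Q : Set (Fin 2 → ℝ)} {p : Fin 2 → ℝ}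

theorem unfolding_eq_image (c : ℝ) (Q : Set (Fin 2 → ℝ)) :
    unfolding c Q = (LinearMap.fst ℝ (Fin 2 → ℝ) ℝ +
      (LinearMap.snd ℝ (Fin 2 → ℝ) ℝ).smulRight (parabolaTangent c)).toAffineMap ''
      ((Q ×ˢ univ) ∩ {q | q.2 ≤ 0} ∩ {q | 2 * c ≤ 2 * q.1 0 + q.2}) := by
  ext z
  simp only [unfolding, mem_image, mem_inter_iff, mem_prod, mem_univ, and_true, mem_ofPred_eq,
    Prod.exists, LinearMap.coe_toAffineMap, LinearMap.add_apply, LinearMap.fst_apply,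
    LinearMap.smulRight_apply, LinearMap.snd_apply]
  constructor
  · rintro ⟨p, hp, μ, hlo, hhi, rfl⟩
    exact ⟨p, μ, ⟨⟨hp, hhi⟩, hlo⟩, rfl⟩
  · rintro ⟨p, μ, ⟨⟨hp, hhi⟩, hlo⟩, rfl⟩
    exact ⟨p, hp, μ, hlo, hhi, rfl⟩

theorem Convex.unfolding (hQ : Convex ℝ Q) (c : ℝ) : Convex ℝ (unfolding c Q) := by
  rw [unfolding_eq_image]
  refine ((hQ.prod convex_univ).inter ?_).inter ?_ |>.affine_image _
  · exact convex_halfSpace_le (LinearMap.snd ℝ (Fin 2 → ℝ) ℝ).isLinear _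
  · exact convex_halfSpace_ge
      ((2 : ℝ) • ((LinearMap.proj 0 : (Fin 2 → ℝ) →ₗ[ℝ] ℝ) ∘ₗ LinearMap.fst ℝ _ ℝ) +
        LinearMap.snd ℝ _ ℝ).isLinear _

theorem HasExtension.unfolding {m : ℕ} (h : HasExtension Q m) (c : ℝ) :
    HasExtension (unfolding c Q) (m + 2) := by
  rw [unfolding_eq_image]
  refine HasExtension.map ?_ _
  exact ((h.prod_univ (F := ℝ)).inter_le AffineMap.snd 0).inter_le
    (AffineMap.const ℝ _ (2 * c))
    ((2 : ℝ) • ((LinearMap.proj 0 : (Fin 2 → ℝ) →ₗ[ℝ] ℝ) ∘ₗ LinearMap.fst ℝ _ ℝ) +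
      LinearMap.snd ℝ _ ℝ).toAffineMap

theorem self_mem_unfolding (hp : p ∈ Q) (hc : c ≤ p 0) : p ∈ unfolding c Q :=
  ⟨p, hp, 0, by linarith, le_rfl, by simp⟩

theorem parabolaReflection_mem_unfolding (hp : p ∈ Q) (hc : c ≤ p 0) :
    parabolaReflection c p ∈ unfolding c Q :=
  ⟨p, hp, 2 * c - 2 * p 0, by linarith, by linarith, parabolaReflection_apply c p⟩

theorem unfolding_subset {K : Set (Fin 2 → ℝ)} (hK : Convex ℝ K) (hQ : Q ⊆ K)
    (hσQ : parabolaReflection c '' Q ⊆ K) : unfolding c Q ⊆ K := by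
  rintro _ ⟨p, hp, μ, hlo, hhi, rfl⟩
  rcases hhi.eq_or_lt with rfl | hμ
  · simpa using hQ hp
  have hD : 2 * c - 2 * p 0 < 0 := by linarith
  have key := hK.add_smul_sub_mem (hQ hp) (hσQ (mem_image_of_mem _ hp))
    ⟨div_nonneg_of_nonpos hμ.le hD.le, (div_le_one_of_neg hD).2 (by linarith)⟩
  rwa [parabolaReflection_apply, add_sub_cancel_left, smul_smul, div_mul_cancel₀ _ hD.ne] at key

end Unfolding

theorem cyclic_two (a b : ℤ) :
    cyclic 2 a b = convexHull ℝ ((fun i : ℤ => parabola i) '' Icc a b) := by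
  have h : ∀ t : ℝ, (fun u : Fin 2 => t ^ ((u : ℕ) + 1)) = parabola t := fun t => by
    ext u; fin_cases u <;> simp [parabola]
  simp only [cyclic, h]
  congr 1
  ext x
  simp [eq_comm, and_assoc]

theorem cyclic_two_self (n : ℤ) : cyclic 2 n n = {parabola n} := by
  rw [cyclic_two, Icc_self, image_singleton, convexHull_singleton]

theorem cyclic_two_eq_unfolding {a a' n : ℤ} (han : a ≤ n) (h₁ : a + n ≤ 2 * a')
    (h₂ : 2 * a' ≤ a + n + 1) : cyclic 2 a n = unfolding ((a + n) / 2) (cyclic 2 a' n) := by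
  rw [cyclic_two, cyclic_two]
  apply Subset.antisymm
  · refine convexHull_min ?_ ((convex_convexHull ℝ _).unfolding _)
    rintro _ ⟨i, ⟨hai, hin⟩, rfl⟩
    rcases le_or_gt (a + n) (2 * i) with hi | hi
    · refine self_mem_unfolding (subset_convexHull ℝ _ ⟨i, ⟨by omega, hin⟩, rfl⟩) ?_
      have : (a : ℝ) + n ≤ 2 * i := by exact_mod_cast hi
      simp only [parabola_apply_zero]
      linarith
    · have hj : a + n - i ∈ Icc a' n := ⟨by omega, by omega⟩
      have hi' : 2 * (i : ℝ) ≤ a + n := by exact_mod_cast hi.le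
      have hmem := parabolaReflection_mem_unfolding (c := ((a : ℝ) + n) / 2)
        (subset_convexHull ℝ _ (mem_image_of_mem (fun i : ℤ => parabola i) hj))
        (by rw [parabola_apply_zero]; push_cast; linarith)
      rwa [parabolaReflection_parabola,
        show 2 * (((a : ℝ) + n) / 2) - ((a + n - i : ℤ) : ℝ) = i by push_cast; ring] at hmem
  · refine unfolding_subset (convex_convexHull ℝ _)
      (convexHull_mono (image_mono (Icc_subset_Icc_left (by omega)))) ?_
    rw [AffineMap.image_convexHull]
    refine convexHull_mono ?_
    rintro _ ⟨_, ⟨j, ⟨hj₁, hj₂⟩, rfl⟩, rfl⟩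
    refine ⟨a + n - j, ⟨by omega, by omega⟩, ?_⟩
    rw [parabolaReflection_parabola]
    push_cast
    ring_nf

theorem hasExtension_cyclic_two (n : ℤ) (q : ℕ) (hq : 1 ≤ q) :
    HasExtension (cyclic 2 (n - q) n) (2 * Nat.log 2 q + 2) := by
  induction q using Nat.strong_induction_on with
  | _ q ih =>
    have hhalf : HasExtension (cyclic 2 (n - (q / 2 : ℕ)) n) (2 * Nat.log 2 q) := by
      rcases Nat.lt_or_ge q 2 with hq2 | hq2
      · obtain rfl : q = 1 := by omega
        simpa [cyclic_two_self] using HasExtension.singleton (parabola n)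
      · have hlog : 1 ≤ Nat.log 2 q := Nat.log_pos one_lt_two hq2
        convert ih (q / 2) (by omega) (by omega) using 2
        rw [Nat.log_div_base]
        omega
    rw [cyclic_two_eq_unfolding (a' := n - (q / 2 : ℕ)) (by omega) (by omega) (by omega)]
    exact hhalf.unfolding _

theorem xc_cyclic_two_dim (n : ℕ) (hn : 3 ≤ n) :
    xc (cyclic 2 1 (n : ℤ)) ≤ 2 * Nat.log 2 (n - 1) + 2 := by
  have h := hasExtension_cyclic_two n (n - 1) (by omega)
  rw [show (n : ℤ) - ((n - 1 : ℕ) : ℤ) = 1 by omega] at h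
  exact xc_le_of_hasExtension h
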